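/- arXiv:math/0703651 — 2 statements merged into one kernel-verified Lean document; each statement's English description precedes it below -/
import Mathlib

section
/- Let A be a unital associative ℂ-algebra and let T be an n×n matrix over A[[s]] with constant term the identity matrix satisfying the Yangian relations. Then the matrix T(−u)^{-1} — the inverse in the matrix ring over A[[s]] of the matrix obtained from T by the substitution s ↦ −s, which exists since the constant term is the identity — also satisfies the Yangian relations. (This is the statement that the assignment T(u) ↦ T(−u)^{-1} defines an automorphism of the Yangian Y(gl_n).) -/
/-! Write `T₁ = T(u) ⊗ 1`, `T₂ = 1 ⊗ T(v)` and `R = (t - s) • 1 - (s t) • P` for the R-matrix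
`R(u - v)` with denominators cleared, so that the Yangian relations read `R T₁ T₂ = T₂ T₁ R`.
Substituting `(s, t) ↦ (-s, -t)` shows that `T(-u)` satisfies the same relation with `R`
replaced by `(s - t) • 1 - (s t) • P`. Inverting both sides and conjugating by the flip `P`,
which exchanges the two legs and fixes `R`, gives this relation for `T(-u)⁻¹` with the roles of
`s` and `t` exchanged; swapping `s` and `t` turns it back into the Yangian relations. -/

noncomputable section

/-- For a 1-based index `i ∈ {1,…,n}` (encoded 0-based as `j : Fin n`), the index `ĩ`:
`ĩ = i−1` if `i` is even, `ĩ = i+1` if `i` is odd and `i < n`, and `ĩ = n` if `i = n` is odd. -/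
def tilde {n : ℕ} (j : Fin n) : Fin n :=
  if j.1 % 2 = 1 then ⟨j.1 - 1, lt_of_le_of_lt (Nat.sub_le _ _) j.2⟩
  else if h : j.1 + 1 < n then ⟨j.1 + 1, h⟩ else j

/-- `θ_i = 1` for all `i` if `ϵ = +1`, and `θ_i = (−1)^{i−1}` (1-based) if `ϵ = −1`. -/
def theta (ϵ : ℤ) {n : ℕ} (j : Fin n) : ℤ :=
  if ϵ = 1 then 1 else (-1) ^ (j : ℕ)

/-- The image of `f(s) ∈ A[[s]]` in `A[[s]][[t]]`, as a series in `s` only. -/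
def inS {A : Type*} [Ring A] (f : PowerSeries A) : PowerSeries (PowerSeries A) :=
  PowerSeries.C f

/-- The image of `f ∈ A[[s]]` in `A[[s]][[t]]` with `s` replaced by `t`. -/
def inT {A : Type*} [Ring A] (f : PowerSeries A) : PowerSeries (PowerSeries A) :=
  PowerSeries.mk fun k => PowerSeries.C (PowerSeries.coeff k f)

/-- The variable `s` of `A[[s]][[t]]`. -/
def svar (A : Type*) [Ring A] : PowerSeries (PowerSeries A) :=
  PowerSeries.C PowerSeries.X

/-- The variable `t` of `A[[s]][[t]]`. -/
def tvar (A : Type*) [Ring A] : PowerSeries (PowerSeries A) :=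
  PowerSeries.X

/-- The defining relations of the Yangian `Y(gl_n)`, with denominators cleared:
`(t−s)·(T_{ij}(s)T_{kl}(t) − T_{kl}(t)T_{ij}(s)) = st·(T_{kj}(s)T_{il}(t) − T_{kj}(t)T_{il}(s))`
in `A[[s,t]]`. -/
def YangianRel {A : Type*} [Ring A] {n : ℕ}
    (T : Matrix (Fin n) (Fin n) (PowerSeries A)) : Prop :=
  ∀ i j k l : Fin n,
    (tvar A - svar A) * (inS (T i j) * inT (T k l) - inT (T k l) * inS (T i j)) =
      svar A * tvar A * (inS (T k j) * inT (T i l) - inT (T k j) * inS (T i l))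

/-- The defining relations of the extended twisted Yangian `X(g_n)`, with denominators
cleared, in `A[[s,t]]`. -/
def ReflectionRel (ϵ : ℤ) {A : Type*} [Ring A] {n : ℕ}
    (S : Matrix (Fin n) (Fin n) (PowerSeries A)) : Prop :=
  ∀ i j k l : Fin n,
    (tvar A ^ 2 - svar A ^ 2) * (inS (S i j) * inT (S k l) - inT (S k l) * inS (S i j)) =
      svar A * tvar A * (svar A + tvar A) *
          (inS (S k j) * inT (S i l) - inT (S k j) * inS (S i l))
        - ϵ • (svar A * tvar A * (tvar A - svar A) *
            ((theta ϵ k * theta ϵ j) • (inS (S i (tilde k)) * inT (S (tilde j) l))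
              - (theta ϵ i * theta ϵ l) • (inT (S k (tilde i)) * inS (S (tilde l) j))))
        + (ϵ * theta ϵ i * theta ϵ j) • (svar A ^ 2 * tvar A ^ 2 *
            (inS (S k (tilde i)) * inT (S (tilde j) l)
              - inT (S k (tilde i)) * inS (S (tilde j) l)))

/-- The substitution `s ↦ −s` on `A[[s]]`. -/
def negSub {A : Type*} [Ring A] (f : PowerSeries A) : PowerSeries A :=
  PowerSeries.mk fun k => (-1) ^ k * PowerSeries.coeff k f

/-- The matrix with entries `S_{ij}(u) = Σ_k θ_i θ_k T_{k̃,ĩ}(−u) T_{k j}(u)`. -/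
def twistMat (ϵ : ℤ) {A : Type*} [Ring A] {n : ℕ}
    (T : Matrix (Fin n) (Fin n) (PowerSeries A)) :
    Matrix (Fin n) (Fin n) (PowerSeries A) :=
  fun i j => ∑ k : Fin n,
    (theta ϵ i * theta ϵ k) • (negSub (T (tilde k) (tilde i)) * T k j)

section RTT

open Matrix

variable {S S' : Type*} [Ring S] [Ring S'] {m : Type*} [Fintype m] [DecidableEq m]

def leftLeg : Matrix m m S →+* Matrix (m × m) (m × m) S :=
  (blockDiagonalRingHom m m S).comp (Pi.constRingHom m (Matrix m m S))

def flipLegs : Matrix (m × m) (m × m) S ≃+* Matrix (m × m) (m × m) S :=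
  reindexRingEquiv S (Equiv.prodComm m m)

def rightLeg : Matrix m m S →+* Matrix (m × m) (m × m) S :=
  flipLegs.toRingHom.comp leftLeg

/-- `w • 1 - z • P`, where `P` is the flip of the two tensor factors. -/
def rMatrix (w z : S) : Matrix (m × m) (m × m) S :=
  of fun p q => (if p = q then w else 0) - (if p.swap = q then z else 0)

def IsRTT (w z : S) (X Y : Matrix m m S) : Prop :=
  SemiconjBy (rMatrix w z) (leftLeg X * rightLeg Y) (rightLeg Y * leftLeg X)

theorem leftLeg_apply (X : Matrix m m S) (i k j l : m) :
    leftLeg X (i, k) (j, l) = if k = l then X i j else 0 := rfl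

theorem rightLeg_apply (X : Matrix m m S) (i k j l : m) :
    rightLeg X (i, k) (j, l) = if i = j then X k l else 0 := rfl

theorem leftLeg_mul_rightLeg_apply (X Y : Matrix m m S) (i k j l : m) :
    (leftLeg X * rightLeg Y) (i, k) (j, l) = X i j * Y k l := by
  simp [mul_apply, Fintype.sum_prod_type, leftLeg_apply, rightLeg_apply, ite_mul, mul_ite]

theorem rightLeg_mul_leftLeg_apply (X Y : Matrix m m S) (i k j l : m) :
    (rightLeg Y * leftLeg X) (i, k) (j, l) = Y k l * X i j := by
  simp [mul_apply, Fintype.sum_prod_type, leftLeg_apply, rightLeg_apply, ite_mul, mul_ite]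

theorem rMatrix_mul_apply (w z : S) (M : Matrix (m × m) (m × m) S) (p q : m × m) :
    (rMatrix w z * M : Matrix (m × m) (m × m) S) p q = w * M p q - z * M p.swap q := by
  simp [rMatrix, mul_apply, sub_mul, ite_mul, Finset.sum_sub_distrib]

theorem mul_rMatrix_apply (w z : S) (M : Matrix (m × m) (m × m) S) (p q : m × m) :
    (M * rMatrix w z : Matrix (m × m) (m × m) S) p q = M p q * w - M p q.swap * z := by
  simp [rMatrix, mul_apply, mul_sub, mul_ite, Finset.sum_sub_distrib, Prod.swap_eq_iff_eq_swap]

theorem isRTT_iff {w z : S} (hw : ∀ x, Commute w x) (hz : ∀ x, Commute z x)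
    (X Y : Matrix m m S) :
    IsRTT w z X Y ↔
      ∀ i j k l, w * (X i j * Y k l - Y k l * X i j) = z * (X k j * Y i l - Y k j * X i l) := by
  simp only [IsRTT, SemiconjBy, ← Matrix.ext_iff, Prod.forall, rMatrix_mul_apply,
    mul_rMatrix_apply, Prod.swap_prod_mk, leftLeg_mul_rightLeg_apply,
    rightLeg_mul_leftLeg_apply, mul_sub, ← (hw _).eq, ← (hz _).eq, sub_eq_sub_iff_sub_eq_sub]
  exact ⟨fun h i j k l => h i k j l, fun h i k j l => h i j k l⟩

theorem leftLeg_map (X : Matrix m m S) (φ : S →+* S') :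
    (leftLeg X).map φ = leftLeg (X.map φ) := by
  ext ⟨i, k⟩ ⟨j, l⟩
  simp [leftLeg_apply, apply_ite φ]

theorem rightLeg_map (X : Matrix m m S) (φ : S →+* S') :
    (rightLeg X).map φ = rightLeg (X.map φ) := by
  ext ⟨i, k⟩ ⟨j, l⟩
  simp [rightLeg_apply, apply_ite φ]

omit [Fintype m] in
theorem rMatrix_map (w z : S) (φ : S →+* S') :
    (rMatrix w z : Matrix (m × m) (m × m) S).map φ = rMatrix (φ w) (φ z) := by
  ext p q
  simp [rMatrix, apply_ite φ]

theorem IsRTT.map {w z : S} {X Y : Matrix m m S} (h : IsRTT w z X Y) (φ : S →+* S') :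
    IsRTT (φ w) (φ z) (X.map φ) (Y.map φ) := by
  simpa only [IsRTT, map_mul, RingHom.mapMatrix_apply, leftLeg_map, rightLeg_map, rMatrix_map]
    using SemiconjBy.map h φ.mapMatrix

theorem flipLegs_leftLeg (X : Matrix m m S) : flipLegs (leftLeg X) = rightLeg X := rfl

theorem flipLegs_rightLeg (X : Matrix m m S) : flipLegs (rightLeg X) = leftLeg X := rfl

theorem flipLegs_rMatrix (w z : S) :
    flipLegs (rMatrix w z : Matrix (m × m) (m × m) S) = rMatrix w z := by
  ext p q
  simp [flipLegs, rMatrix, Prod.swap_eq_iff_eq_swap]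

theorem IsRTT.inv {w z : S} {X Y : (Matrix m m S)ˣ} (h : IsRTT w z (X : Matrix m m S) Y) :
    IsRTT w z (↑Y⁻¹ : Matrix m m S) (↑X⁻¹ : Matrix m m S) := by
  have hinv := SemiconjBy.units_inv_right (a := rMatrix w z)
    (x := Units.map leftLeg.toMonoidHom X * Units.map rightLeg.toMonoidHom Y)
    (y := Units.map rightLeg.toMonoidHom Y * Units.map leftLeg.toMonoidHom X) h
  simp only [_root_.mul_inv_rev, Units.val_mul, Units.coe_map_inv, RingHom.toMonoidHom_eq_coe,
    MonoidHom.coe_coe] at hinv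
  simpa only [IsRTT, map_mul, flipLegs_rMatrix, flipLegs_leftLeg, flipLegs_rightLeg]
    using hinv.map flipLegs

end RTT

section PowerSeries

open PowerSeries

variable {B : Type*} [Ring B]

theorem coeff_negSub (f : PowerSeries B) (k : ℕ) :
    coeff k (negSub f) = (-1) ^ k * coeff k f :=
  coeff_mk _ _

def negSubHom (B : Type*) [Ring B] : PowerSeries B →+* PowerSeries B where
  toFun := negSub
  map_one' := by
    ext (_ | k) <;> simp [coeff_negSub, coeff_one]
  map_mul' f g := by
    ext k
    simp only [coeff_negSub, coeff_mul, Finset.mul_sum]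
    refine Finset.sum_congr rfl fun p hp => ?_
    rw [← Finset.HasAntidiagonal.mem_antidiagonal.1 hp, pow_add, mul_assoc,
      ((Commute.neg_one_left _).pow_left p.2).symm.mul_mul_mul_comm, mul_assoc]
  map_zero' := by ext; simp [coeff_negSub]
  map_add' f g := by ext; simp [coeff_negSub, mul_add]

theorem negSubHom_apply (f : PowerSeries B) : negSubHom B f = negSub f := rfl

theorem negSubHom_C (b : B) : negSubHom B (C b) = C b := by
  ext (_ | k) <;> simp [negSubHom_apply, coeff_negSub, coeff_C]

theorem negSubHom_X : negSubHom B X = -X := by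
  ext (_ | _ | k) <;> simp [negSubHom_apply, coeff_negSub, coeff_X]

def inSHom (B : Type*) [Ring B] : PowerSeries B →+* PowerSeries (PowerSeries B) := C

def inTHom (B : Type*) [Ring B] : PowerSeries B →+* PowerSeries (PowerSeries B) := map C

@[simp]
theorem coe_inSHom : ⇑(inSHom B) = inS := rfl

@[simp]
theorem coe_inTHom : ⇑(inTHom B) = inT := by
  ext f k
  simp [inTHom, inT, coeff_map]

def negBoth (B : Type*) [Ring B] : PowerSeries (PowerSeries B) →+* PowerSeries (PowerSeries B) :=
  (negSubHom (PowerSeries B)).comp (map (negSubHom B))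

theorem negBoth_inS (f : PowerSeries B) : negBoth B (inS f) = inS (negSub f) := by
  rw [negBoth, RingHom.comp_apply, inS, map_C, negSubHom_C, negSubHom_apply, inS]

theorem negBoth_inT (f : PowerSeries B) : negBoth B (inT f) = inT (negSub f) := by
  ext k : 1
  rw [negBoth, RingHom.comp_apply, negSubHom_apply, coeff_negSub, coeff_map, inT, coeff_mk,
    negSubHom_C, inT, coeff_mk, coeff_negSub, map_mul, map_pow, map_neg, map_one]

theorem negBoth_svar : negBoth B (svar B) = -svar B := by
  simp [negBoth, svar, negSubHom_X, negSubHom_C]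

theorem negBoth_tvar : negBoth B (tvar B) = -tvar B := by
  simp [negBoth, tvar, negSubHom_X]

def swapVars (B : Type*) [Ring B] :
    PowerSeries (PowerSeries B) →+* PowerSeries (PowerSeries B) where
  toFun F := mk fun k => mk fun j => coeff k (coeff j F)
  map_one' := by
    ext k j
    by_cases hk : k = 0 <;> by_cases hj : j = 0 <;> simp [coeff_one, hk, hj]
  map_mul' F G := by
    ext k j
    simp only [coeff_mk, coeff_mul, map_sum]
    exact Finset.sum_comm
  map_zero' := by ext; simp
  map_add' F G := by ext; simp

theorem coeff_coeff_swapVars (F : PowerSeries (PowerSeries B)) (j k : ℕ) :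
    coeff j (coeff k (swapVars B F)) = coeff k (coeff j F) := by
  simp [swapVars]

theorem swapVars_inS (f : PowerSeries B) : swapVars B (inS f) = inT f := by
  ext k j
  rw [coeff_coeff_swapVars]
  simp only [inS, inT, coeff_C, coeff_mk]
  split_ifs <;> simp

theorem swapVars_inT (f : PowerSeries B) : swapVars B (inT f) = inS f := by
  ext k j
  rw [coeff_coeff_swapVars]
  simp only [inS, inT, coeff_C, coeff_mk]
  split_ifs <;> simp

theorem swapVars_svar : swapVars B (svar B) = tvar B := by
  ext k j
  rw [coeff_coeff_swapVars]
  simp only [svar, tvar, coeff_C, coeff_X]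
  split_ifs <;> simp_all [coeff_X, coeff_one]

theorem swapVars_tvar : swapVars B (tvar B) = svar B := by
  ext k j
  rw [coeff_coeff_swapVars]
  simp only [svar, tvar, coeff_C, coeff_X]
  split_ifs <;> simp_all [coeff_X, coeff_one]

theorem commute_svar (F : PowerSeries (PowerSeries B)) : Commute (svar B) F := by
  ext k : 1
  simp [svar, coeff_C_mul, coeff_mul_C, (commute_X _).eq]

theorem commute_tvar (F : PowerSeries (PowerSeries B)) : Commute (tvar B) F :=
  (commute_X F).symm

theorem yangianRel_iff_isRTT {n : ℕ} (T : Matrix (Fin n) (Fin n) (PowerSeries B)) :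
    YangianRel T ↔ IsRTT (tvar B - svar B) (svar B * tvar B) (T.map inS) (T.map inT) := by
  rw [isRTT_iff (fun x => (commute_tvar x).sub_left (commute_svar x))
    (fun x => (commute_svar x).mul_left (commute_tvar x))]
  rfl

end PowerSeries

theorem statement5_general (n : ℕ) (A : Type*) [Ring A]
    (T : Matrix (Fin n) (Fin n) (PowerSeries A))
    (hT : YangianRel T)
    (T' : Matrix (Fin n) (Fin n) (PowerSeries A))
    (hleft : (Matrix.of fun i j => negSub (T i j)) * T' = 1)
    (hright : T' * (Matrix.of fun i j => negSub (T i j)) = 1) :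
    YangianRel T' := by
  obtain ⟨U, hU, hU'⟩ : ∃ U : (Matrix (Fin n) (Fin n) (PowerSeries A))ˣ,
      ↑U = T.map negSub ∧ ↑U⁻¹ = T' :=
    ⟨⟨_, T', hleft, hright⟩, rfl, rfl⟩
  have hRTT : IsRTT (svar A - tvar A) (svar A * tvar A)
      (Units.map (inSHom A).mapMatrix.toMonoidHom U : Matrix (Fin n) (Fin n) _)
      (Units.map (inTHom A).mapMatrix.toMonoidHom U) := by
    simpa [hU, neg_add_eq_sub, negBoth_svar, negBoth_tvar, Matrix.map_map, Function.comp_def,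
      negBoth_inS, negBoth_inT] using ((yangianRel_iff_isRTT T).1 hT).map (negBoth A)
  rw [yangianRel_iff_isRTT]
  simpa [hU', swapVars_svar, swapVars_tvar, Matrix.map_map, Function.comp_def, swapVars_inS,
    swapVars_inT, (commute_tvar _).eq] using hRTT.inv.map (swapVars A)

theorem statement5 (n : ℕ) (hn : 0 < n) (A : Type*) [Ring A] [Algebra ℂ A]
    (T : Matrix (Fin n) (Fin n) (PowerSeries A))
    (hT0 : ∀ i j, PowerSeries.constantCoeff (T i j) = if i = j then 1 else 0)
    (hT : YangianRel T)
    (T' : Matrix (Fin n) (Fin n) (PowerSeries A))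
    (hleft : (Matrix.of fun i j => negSub (T i j)) * T' = 1)
    (hright : T' * (Matrix.of fun i j => negSub (T i j)) = 1) :
    YangianRel T' :=
  statement5_general n A T hT T' hleft hright

end
end

section
/- Let R be a commutative ℚ-algebra and let f ∈ R[[t]] be a formal power series with constant coefficient 1 such that f(t)·f(−t) = 1, where f(−t) denotes the image of f under the R-algebra endomorphism of R[[t]] sending t to −t. Then there exists g ∈ R[[t]] with constant coefficient 1 such that g(−t) = f(t)·g(t). -/
/-!
No square root is needed: with `f̄ = f(−t)`, the series `g = (1 + f̄)/2` works, since
`g(−t) = (1 + f)/2 = f · (f̄ + 1)/2` by `f · f̄ = 1`, and its constant coefficient is `(1 + 1)/2`.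
-/

open PowerSeries

theorem PowerSeries.rescale_C {R : Type*} [CommSemiring R] (a c : R) : rescale a (C c) = C c := by
  ext (_ | n) <;> simp [coeff_C]

theorem PowerSeries.rescale_neg_one_rescale_neg_one {R : Type*} [CommRing R] (f : R⟦X⟧) :
    rescale (-1 : R) (rescale (-1 : R) f) = f := by
  rw [rescale_rescale, neg_one_mul, neg_neg, rescale_one, RingHom.id_apply]

theorem PowerSeries.exists_rescale_neg_one_eq_mul {R : Type*} [CommRing R] [Invertible (2 : R)]
    (f : R⟦X⟧) (hf0 : constantCoeff f = 1) (hf : f * rescale (-1 : R) f = 1) :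
    ∃ g : R⟦X⟧, constantCoeff g = 1 ∧ rescale (-1 : R) g = f * g := by
  refine ⟨C (⅟2 : R) * (1 + rescale (-1 : R) f), ?_, ?_⟩
  · rw [map_mul, map_add, constantCoeff_C, map_one, ← coeff_zero_eq_constantCoeff_apply,
      coeff_rescale, pow_zero, one_mul, coeff_zero_eq_constantCoeff_apply, hf0, one_add_one_eq_two,
      invOf_mul_self]
  · rw [map_mul, map_add, map_one, rescale_neg_one_rescale_neg_one, rescale_C, mul_left_comm,
      mul_add f, hf, mul_one, add_comm]

theorem isUnit_two_of_algebra_rat (R : Type*) [Ring R] [Algebra ℚ R] : IsUnit (2 : R) := by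
  simpa only [map_ofNat] using (IsUnit.mk0 (2 : ℚ) two_ne_zero).map (algebraMap ℚ R)

theorem statement11 (R : Type*) [CommRing R] [Algebra ℚ R] (f : PowerSeries R)
    (hf0 : PowerSeries.constantCoeff f = 1)
    (hf : f * PowerSeries.rescale (-1 : R) f = 1) :
    ∃ g : PowerSeries R, PowerSeries.constantCoeff g = 1 ∧
      PowerSeries.rescale (-1 : R) g = f * g := by
  let _ : Invertible (2 : R) := (isUnit_two_of_algebra_rat R).invertible
  exact exists_rescale_neg_one_eq_mul f hf0 hf
end
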